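/- (Adequacy of mbC with respect to swap structures.) For every set Γ ∪ {φ} of formulas over the signature Σ = {∧, ∨, →, ¬, ∘}: Γ ⊢_{mbC} φ if and only if Γ ⊨_{Mat(K_mbC)} φ, i.e. for every swap structure B for mbC over a Boolean algebra and every valuation v over the Nmatrix M(B) with v[Γ] ⊆ D_B, it holds that v(φ) ∈ D_B. -/

import Mathlib

universe u v w u₂

/-- A multialgebra (hyperalgebra, non-deterministic algebra) over a signature `σ`,
where `σ n` is the set of `n`-ary operator symbols: each operator is interpreted as a
multioperation taking values in the nonempty subsets of the (nonempty) support. -/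
structure MultiAlg (σ : ℕ → Type v) : Type (max (u + 1) v) where
  carrier : Type u
  nonempty : Nonempty carrier
  op : ∀ {n : ℕ}, σ n → (Fin n → carrier) → Set carrier
  op_nonempty : ∀ {n : ℕ} (c : σ n) (a : Fin n → carrier), (op c a).Nonempty

namespace MultiAlg

variable {σ : ℕ → Type v}

/-- Homomorphism of multialgebras: `f[c^A(ā)] ⊆ c^B(f ∘ ā)`. -/
def IsHom (A : MultiAlg.{u} σ) (B : MultiAlg.{u₂} σ) (f : A.carrier → B.carrier) : Prop :=
  ∀ {n : ℕ} (c : σ n) (a : Fin n → A.carrier), f '' A.op c a ⊆ B.op c (f ∘ a)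

/-- Full homomorphism of multialgebras: `f[c^A(ā)] = c^B(f ∘ ā)`. -/
def IsFullHom (A : MultiAlg.{u} σ) (B : MultiAlg.{u₂} σ) (f : A.carrier → B.carrier) : Prop :=
  ∀ {n : ℕ} (c : σ n) (a : Fin n → A.carrier), f '' A.op c a = B.op c (f ∘ a)

/-- Isomorphism in the category `MAlg(σ)`: a homomorphism with a two-sided
inverse homomorphism. -/
def IsIso (A : MultiAlg.{u} σ) (B : MultiAlg.{u₂} σ) (f : A.carrier → B.carrier) : Prop :=
  IsHom A B f ∧ ∃ g : B.carrier → A.carrier,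
    IsHom B A g ∧ Function.LeftInverse g f ∧ Function.RightInverse g f

/-- Monomorphism in the category `MAlg(σ)`: a homomorphism which is
left-cancellable with respect to homomorphisms. -/
def IsMono (A : MultiAlg.{u} σ) (B : MultiAlg.{u₂} σ) (f : A.carrier → B.carrier) : Prop :=
  IsHom A B f ∧ ∀ (C : MultiAlg.{w} σ) (g h : C.carrier → A.carrier),
    IsHom C A g → IsHom C A h → f ∘ g = f ∘ h → g = h

/-- Epimorphism in the category `MAlg(σ)`: a homomorphism which is
right-cancellable with respect to homomorphisms. -/
def IsEpi (A : MultiAlg.{u} σ) (B : MultiAlg.{u₂} σ) (f : A.carrier → B.carrier) : Prop :=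
  IsHom A B f ∧ ∀ (C : MultiAlg.{w} σ) (g h : B.carrier → C.carrier),
    IsHom B C g → IsHom B C h → g ∘ f = h ∘ f → g = h

/-- The product of a family of multialgebras. -/
def pi {I : Type w} (F : I → MultiAlg.{u} σ) : MultiAlg.{max u w} σ where
  carrier := ∀ i, (F i).carrier
  nonempty := ⟨fun i => Classical.choice (F i).nonempty⟩
  op := fun {n} c a => {x | ∀ i, x i ∈ (F i).op c fun k => a k i}
  op_nonempty := fun {n} c a =>
    ⟨fun i => ((F i).op_nonempty c fun k => a k i).choose,
      fun i => ((F i).op_nonempty c fun k => a k i).choose_spec⟩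

/-- The one-element multialgebra. -/
def one (σ : ℕ → Type v) : MultiAlg.{u} σ where
  carrier := PUnit
  nonempty := ⟨PUnit.unit⟩
  op := fun _ _ => {PUnit.unit}
  op_nonempty := fun _ _ => ⟨PUnit.unit, rfl⟩

/-- The direct image of a function between (the supports of) two multialgebras,
as a submultialgebra of the codomain:
`c^{f(A)}(b̄) = ⋃ { f[c^A(ā)] : ā ∈ f⁻¹(b̄) }`. -/
def dirIm (A : MultiAlg.{u} σ) (B : MultiAlg.{u₂} σ) (f : A.carrier → B.carrier) :
    MultiAlg.{u₂} σ where
  carrier := ↥(Set.range f)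
  nonempty := ⟨⟨f (Classical.choice A.nonempty), Set.mem_range_self _⟩⟩
  op := fun {n} c b => {y | ∃ a : Fin n → A.carrier,
    (∀ i, f (a i) = (b i : B.carrier)) ∧ (y : B.carrier) ∈ f '' A.op c a}
  op_nonempty := by
    intro n c b
    choose a ha using fun i => (b i).2
    obtain ⟨x, hx⟩ := A.op_nonempty c a
    exact ⟨⟨f x, Set.mem_range_self x⟩, a, ha, x, hx, rfl⟩

/-- The corestriction `f̄ : A → f(A)` of `f` to the direct image. -/
def corestrict (A : MultiAlg.{u} σ) (B : MultiAlg.{u₂} σ) (f : A.carrier → B.carrier) :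
    A.carrier → (dirIm A B f).carrier :=
  fun x => ⟨f x, Set.mem_range_self x⟩

/-- The inclusion `g : f(A) → B` of the direct image in the codomain. -/
def dirImIncl (A : MultiAlg.{u} σ) (B : MultiAlg.{u₂} σ) (f : A.carrier → B.carrier) :
    (dirIm A B f).carrier → B.carrier :=
  fun y => y.val

/-- A multicongruence over a multialgebra. -/
structure IsMulticongruence (A : MultiAlg.{u} σ) (r : A.carrier → A.carrier → Prop) : Prop where
  equivalence : Equivalence r
  compat : ∀ {n : ℕ} (c : σ n) (a b : Fin n → A.carrier), (∀ i, r (a i) (b i)) →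
    ∀ x ∈ A.op c a, ∃ y ∈ A.op c b, r x y
  const : ∀ (c : σ 0) (a : Fin 0 → A.carrier) (x y : A.carrier),
    x ∈ A.op c a → y ∈ A.op c a → r x y

/-- The quotient multialgebra of `A` modulo a relation `r`:
`c^{A/Θ}(a₁/Θ, …, aₙ/Θ) = { a/Θ : a ∈ c^A(ā) }` (taking the union over all
representatives, which is irrelevant when `r` is a multicongruence). -/
def quotAlg (A : MultiAlg.{u} σ) (r : A.carrier → A.carrier → Prop) : MultiAlg.{u} σ where
  carrier := Quot r
  nonempty := A.nonempty.map (Quot.mk r)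
  op := fun {n} c q => {y | ∃ a : Fin n → A.carrier,
    (∀ i, Quot.mk r (a i) = q i) ∧ ∃ x ∈ A.op c a, y = Quot.mk r x}
  op_nonempty := by
    intro n c q
    choose a ha using fun i => Quot.exists_rep (q i)
    obtain ⟨x, hx⟩ := A.op_nonempty c a
    exact ⟨Quot.mk r x, a, ha, x, hx, rfl⟩

end MultiAlg



/-- The signature `Σ = {∧, ∨, →, ¬, ∘}` of the logic mbC. -/
inductive SwapSig : ℕ → Type
  | and : SwapSig 2
  | or : SwapSig 2
  | imp : SwapSig 2
  | neg : SwapSig 1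
  | circ : SwapSig 1

/-- The constraint on the first coordinate of the output of each multioperation
of a swap structure (computed in the underlying Boolean algebra). -/
def swapTgt {A : Type u} [BooleanAlgebra A] :
    ∀ {n : ℕ}, SwapSig n → (Fin n → A × A × A) → A
  | _, .and, a => (a 0).1 ⊓ (a 1).1
  | _, .or, a => (a 0).1 ⊔ (a 1).1
  | _, .imp, a => (a 0).1 ⇨ (a 1).1
  | _, .neg, a => (a 0).2.1
  | _, .circ, a => (a 0).2.2

/-- A swap structure for CPL⁺ₑ over a Boolean algebra `A`: a multialgebra over the
signature `{∧, ∨, →, ¬, ∘}` whose domain is a set of triples (snapshots) in `A³`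
containing some snapshot with first coordinate `0`, and whose (nonempty-valued)
multioperations satisfy
`∅ ≠ z # w ⊆ {u ∈ dom | u₁ = z₁ # w₁}` (for `# ∈ {∧,∨,→}`),
`∅ ≠ ¬z ⊆ {u ∈ dom | u₁ = z₂}` and `∅ ≠ ∘z ⊆ {u ∈ dom | u₁ = z₃}`. -/
structure SwapStr (A : Type u) [BooleanAlgebra A] : Type u where
  dom : Set (A × A × A)
  op : ∀ {n : ℕ}, SwapSig n → (Fin n → A × A × A) → Set (A × A × A)
  fst_zero : ∃ z ∈ dom, z.1 = ⊥
  op_nonempty : ∀ {n : ℕ} (c : SwapSig n) (a : Fin n → A × A × A),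
    (∀ i, a i ∈ dom) → (op c a).Nonempty
  op_sub : ∀ {n : ℕ} (c : SwapSig n) (a : Fin n → A × A × A), (∀ i, a i ∈ dom) →
    op c a ⊆ {u ∈ dom | u.1 = swapTgt c a}



namespace SwapStr

variable {A : Type u} [BooleanAlgebra A]

/-- The multialgebra over the signature `{∧, ∨, →, ¬, ∘}` underlying a swap structure. -/
def toMultiAlg (S : SwapStr A) : MultiAlg SwapSig where
  carrier := ↥S.dom
  nonempty := by
    obtain ⟨z, hz, -⟩ := S.fst_zero
    exact ⟨⟨z, hz⟩⟩
  op := fun {n} c a => {u : ↥S.dom | (u : A × A × A) ∈ S.op c fun i => (a i : A × A × A)}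
  op_nonempty := by
    intro n c a
    obtain ⟨x, hx⟩ := S.op_nonempty c (fun i => (a i : A × A × A)) fun i => (a i).2
    exact ⟨⟨x, (S.op_sub c _ (fun i => (a i).2) hx).1⟩, hx⟩

end SwapStr

/-- The universe of swap structures for mbC over `A`:
`B_A^{mbC} = {z ∈ A³ : z₁ ∨ z₂ = 1 and z₁ ∧ z₂ ∧ z₃ = 0}`. -/
def BmbcSet (A : Type u) [BooleanAlgebra A] : Set (A × A × A) :=
  {z | z.1 ⊔ z.2.1 = ⊤ ∧ z.1 ⊓ z.2.1 ⊓ z.2.2 = ⊥}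

/-- The universe of swap structures for mbCciw over `A`:
`B_A^{ciw} = {z ∈ B_A^{mbC} : z₃ ∨ (z₁ ∧ z₂) = 1}`. -/
def BciwSet (A : Type u) [BooleanAlgebra A] : Set (A × A × A) :=
  {z | z ∈ BmbcSet A ∧ z.2.2 ⊔ (z.1 ⊓ z.2.1) = ⊤}

/-- The full swap structure for mbC over `A`, with domain `B_A^{mbC}` and maximal
multioperations. -/
def fullMbc (A : Type u) [BooleanAlgebra A] : SwapStr A where
  dom := BmbcSet A
  op := fun {n} c a => {u ∈ BmbcSet A | u.1 = swapTgt c a}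
  fst_zero := ⟨(⊥, ⊤, ⊤), ⟨by simp, by simp⟩, rfl⟩
  op_nonempty := fun {n} c a _ =>
    ⟨(swapTgt c a, (swapTgt c a)ᶜ, ⊤), ⟨by simp, by simp⟩, rfl⟩
  op_sub := fun {n} c a _ => Set.Subset.refl _

/-- The full swap structure for CPL⁺ₑ over `A`, with domain `A³` and maximal
multioperations. -/
def fullCPLe (A : Type u) [BooleanAlgebra A] : SwapStr A where
  dom := Set.univ
  op := fun {n} c a => {u | u.1 = swapTgt c a}
  fst_zero := ⟨(⊥, ⊥, ⊥), trivial, rfl⟩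
  op_nonempty := fun {n} c a _ => ⟨(swapTgt c a, ⊥, ⊥), rfl⟩
  op_sub := fun {n} c a _ u hu => ⟨trivial, hu⟩

/-- The map `f⋆(z) = (f(z₁), f(z₂), f(z₃))` induced on full swap structures for mbC
by a Boolean algebra homomorphism `f`. -/
def mapMbc {A : Type u} {A' : Type u₂} [BooleanAlgebra A] [BooleanAlgebra A']
    (f : BoundedLatticeHom A A') (z : ↥(BmbcSet A)) : ↥(BmbcSet A') :=
  ⟨(f z.1.1, f z.1.2.1, f z.1.2.2), by
    obtain ⟨h1, h2⟩ := z.2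
    constructor
    · rw [← map_sup, h1, map_top]
    · rw [← map_inf, ← map_inf, h2, map_bot]⟩

/-- A bundled swap structure for mbC (an object of the category `SW_mbC`). -/
structure MbcSwap : Type (u + 1) where
  base : Type u
  [ba : BooleanAlgebra base]
  str : SwapStr base
  mbc : str.dom ⊆ BmbcSet base

attribute [instance] MbcSwap.ba

/-- Formulas of the logic mbC over the signature `Σ = {∧, ∨, →, ¬, ∘}`,
generated by a denumerable set of propositional variables. -/
inductive Form : Type
  | var : ℕ → Form
  | and : Form → Form → Form
  | or : Form → Form → Form
  | imp : Form → Form → Form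
  | neg : Form → Form
  | circ : Form → Form

/-- A valuation over the Nmatrix `M(S) = (S, D_S)` associated to a swap structure `S`,
where `D_S = {z ∈ dom S : z₁ = 1}`: a map `v` from formulas to the domain of `S` such
that the value of a compound formula belongs to the multioperation applied to the values
of its immediate subformulas. -/
structure IsSwapVal {A : Type u} [BooleanAlgebra A] (S : SwapStr A)
    (v : Form → A × A × A) : Prop where
  mem : ∀ φ, v φ ∈ S.dom
  vand : ∀ φ ψ, v (φ.and ψ) ∈ S.op .and ![v φ, v ψ]
  vor : ∀ φ ψ, v (φ.or ψ) ∈ S.op .or ![v φ, v ψ]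
  vimp : ∀ φ ψ, v (φ.imp ψ) ∈ S.op .imp ![v φ, v ψ]
  vneg : ∀ φ, v φ.neg ∈ S.op .neg ![v φ]
  vcirc : ∀ φ, v φ.circ ∈ S.op .circ ![v φ]

/-- Derivability in the Hilbert calculus CPL⁺ₑ (positive classical logic over the
signature `{∧, ∨, →, ¬, ∘}`, with no axioms or rules for `¬` and `∘`). -/
inductive CPLeDeriv : Set Form → Form → Prop
  | prem {Γ : Set Form} {φ : Form} : φ ∈ Γ → CPLeDeriv Γ φ
  | ax1 (Γ : Set Form) (α β : Form) : CPLeDeriv Γ (α.imp (β.imp α))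
  | ax2 (Γ : Set Form) (α β γ : Form) :
      CPLeDeriv Γ ((α.imp (β.imp γ)).imp ((α.imp β).imp (α.imp γ)))
  | ax3 (Γ : Set Form) (α β : Form) : CPLeDeriv Γ (α.imp (β.imp (α.and β)))
  | ax4 (Γ : Set Form) (α β : Form) : CPLeDeriv Γ ((α.and β).imp α)
  | ax5 (Γ : Set Form) (α β : Form) : CPLeDeriv Γ ((α.and β).imp β)
  | ax6 (Γ : Set Form) (α β : Form) : CPLeDeriv Γ (α.imp (α.or β))
  | ax7 (Γ : Set Form) (α β : Form) : CPLeDeriv Γ (β.imp (α.or β))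
  | ax8 (Γ : Set Form) (α β γ : Form) :
      CPLeDeriv Γ ((α.imp γ).imp ((β.imp γ).imp ((α.or β).imp γ)))
  | ax9 (Γ : Set Form) (α β : Form) : CPLeDeriv Γ ((α.imp β).or α)
  | mp {Γ : Set Form} {α β : Form} :
      CPLeDeriv Γ (α.imp β) → CPLeDeriv Γ α → CPLeDeriv Γ β

/-- Derivability in the Hilbert calculus mbC: CPL⁺ₑ plus
Ax10 `α ∨ ¬α` and bc1 `∘α → (α → (¬α → β))`. -/
inductive MbcDeriv : Set Form → Form → Prop
  | prem {Γ : Set Form} {φ : Form} : φ ∈ Γ → MbcDeriv Γ φ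
  | ax1 (Γ : Set Form) (α β : Form) : MbcDeriv Γ (α.imp (β.imp α))
  | ax2 (Γ : Set Form) (α β γ : Form) :
      MbcDeriv Γ ((α.imp (β.imp γ)).imp ((α.imp β).imp (α.imp γ)))
  | ax3 (Γ : Set Form) (α β : Form) : MbcDeriv Γ (α.imp (β.imp (α.and β)))
  | ax4 (Γ : Set Form) (α β : Form) : MbcDeriv Γ ((α.and β).imp α)
  | ax5 (Γ : Set Form) (α β : Form) : MbcDeriv Γ ((α.and β).imp β)
  | ax6 (Γ : Set Form) (α β : Form) : MbcDeriv Γ (α.imp (α.or β))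
  | ax7 (Γ : Set Form) (α β : Form) : MbcDeriv Γ (β.imp (α.or β))
  | ax8 (Γ : Set Form) (α β γ : Form) :
      MbcDeriv Γ ((α.imp γ).imp ((β.imp γ).imp ((α.or β).imp γ)))
  | ax9 (Γ : Set Form) (α β : Form) : MbcDeriv Γ ((α.imp β).or α)
  | ax10 (Γ : Set Form) (α : Form) : MbcDeriv Γ (α.or α.neg)
  | bc1 (Γ : Set Form) (α β : Form) : MbcDeriv Γ (α.circ.imp (α.imp (α.neg.imp β)))
  | mp {Γ : Set Form} {α β : Form} :
      MbcDeriv Γ (α.imp β) → MbcDeriv Γ α → MbcDeriv Γ β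


/-! The Nmatrices of swap structures are sound since the first coordinates of a valuation
behave classically and `B_A^{mbC}` validates Ax10 and bc1 snapshot-wise. For completeness,
a set `Δ ⊇ Γ` maximal among those not deriving `φ` is closed under the positive
connectives classically, and `ψ ↦ (ψ ∈ Δ, ¬ψ ∈ Δ, ∘ψ ∈ Δ)` is a valuation over the full
two-valued swap structure for mbC (Ax10 and bc1 put these triples in `B_2^{mbC}`) that
refutes `Γ ⊢ φ`. -/

section Soundness

variable {A : Type*} [BooleanAlgebra A] {S : SwapStr A} {v : Form → A × A × A}

namespace IsSwapVal

theorem fst_and (hv : IsSwapVal S v) (α β : Form) : (v (α.and β)).1 = (v α).1 ⊓ (v β).1 :=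
  (S.op_sub .and _ (Fin.forall_fin_two.2 ⟨hv.mem α, hv.mem β⟩) (hv.vand α β)).2

theorem fst_or (hv : IsSwapVal S v) (α β : Form) : (v (α.or β)).1 = (v α).1 ⊔ (v β).1 :=
  (S.op_sub .or _ (Fin.forall_fin_two.2 ⟨hv.mem α, hv.mem β⟩) (hv.vor α β)).2

theorem fst_imp (hv : IsSwapVal S v) (α β : Form) : (v (α.imp β)).1 = (v α).1 ⇨ (v β).1 :=
  (S.op_sub .imp _ (Fin.forall_fin_two.2 ⟨hv.mem α, hv.mem β⟩) (hv.vimp α β)).2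

theorem fst_neg (hv : IsSwapVal S v) (α : Form) : (v α.neg).1 = (v α).2.1 :=
  (S.op_sub .neg _ (Fin.forall_fin_one.2 (hv.mem α)) (hv.vneg α)).2

theorem fst_circ (hv : IsSwapVal S v) (α : Form) : (v α.circ).1 = (v α).2.2 :=
  (S.op_sub .circ _ (Fin.forall_fin_one.2 (hv.mem α)) (hv.vcirc α)).2

end IsSwapVal

theorem MbcDeriv.sound {Γ : Set Form} {φ : Form} (h : MbcDeriv Γ φ) (hS : S.dom ⊆ BmbcSet A)
    (hv : IsSwapVal S v) (hΓ : ∀ γ ∈ Γ, (v γ).1 = ⊤) : (v φ).1 = ⊤ := by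
  induction h with
  | prem h => exact hΓ _ h
  | ax1 α β => rw [hv.fst_imp, hv.fst_imp, himp_eq_top_iff]; exact le_himp
  | ax2 α β γ =>
    simp only [hv.fst_imp]
    rw [himp_eq_top_iff, le_himp_iff, le_himp_iff, inf_assoc, himp_inf_self, himp_himp,
      inf_comm (v β).1]
    exact himp_inf_le
  | ax3 α β => simp only [hv.fst_imp, hv.fst_and, himp_eq_top_iff, le_himp_iff, le_rfl]
  | ax4 α β => rw [hv.fst_imp, hv.fst_and, himp_eq_top_iff]; exact inf_le_left
  | ax5 α β => rw [hv.fst_imp, hv.fst_and, himp_eq_top_iff]; exact inf_le_right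
  | ax6 α β => rw [hv.fst_imp, hv.fst_or, himp_eq_top_iff]; exact le_sup_left
  | ax7 α β => rw [hv.fst_imp, hv.fst_or, himp_eq_top_iff]; exact le_sup_right
  | ax8 α β γ => simp [hv.fst_imp, hv.fst_or, sup_himp_distrib, le_himp_iff]
  | ax9 α β => simp [hv.fst_or, hv.fst_imp, himp_eq, sup_assoc]
  | ax10 α => rw [hv.fst_or, hv.fst_neg]; exact (hS (hv.mem α)).1
  | bc1 α β =>
    simp only [hv.fst_imp, hv.fst_circ, hv.fst_neg]
    rw [himp_himp, himp_himp, inf_assoc, inf_comm, (hS (hv.mem α)).2, bot_himp]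
  | mp _ _ ih₁ ih₂ => rwa [hv.fst_imp, ih₂, top_himp] at ih₁

end Soundness

namespace MbcDeriv

@[elab_as_elim]
theorem induction_on {Γ : Set Form} {P : Form → Prop} {φ : Form} (h : MbcDeriv Γ φ)
    (prem : ∀ ψ ∈ Γ, P ψ) (logical : ∀ ψ, (∀ Δ, MbcDeriv Δ ψ) → P ψ)
    (mp : ∀ α β, P (α.imp β) → P α → P β) : P φ := by
  induction h with
  | prem h => exact prem _ h
  | ax1 => exact logical _ (ax1 · _ _)
  | ax2 => exact logical _ (ax2 · _ _ _)
  | ax3 => exact logical _ (ax3 · _ _)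
  | ax4 => exact logical _ (ax4 · _ _)
  | ax5 => exact logical _ (ax5 · _ _)
  | ax6 => exact logical _ (ax6 · _ _)
  | ax7 => exact logical _ (ax7 · _ _)
  | ax8 => exact logical _ (ax8 · _ _ _)
  | ax9 => exact logical _ (ax9 · _ _)
  | ax10 => exact logical _ (ax10 · _)
  | bc1 => exact logical _ (bc1 · _ _)
  | mp _ _ ih₁ ih₂ => exact mp _ _ ih₁ ih₂

variable {Γ Δ : Set Form} {φ ψ : Form}

theorem mono (h : MbcDeriv Γ φ) (hΓΔ : Γ ⊆ Δ) : MbcDeriv Δ φ :=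
  h.induction_on (fun _ hψ => prem (hΓΔ hψ)) (fun _ hψ => hψ Δ) fun _ _ => mp

protected theorem imp_self (Γ : Set Form) (α : Form) : MbcDeriv Γ (α.imp α) :=
  mp (mp (ax2 Γ α (α.imp α) α) (ax1 Γ α (α.imp α))) (ax1 Γ α α)

theorem deduction (h : MbcDeriv (insert ψ Γ) φ) : MbcDeriv Γ (ψ.imp φ) := by
  refine h.induction_on (fun χ hχ => ?_) (fun χ hχ => mp (ax1 Γ χ ψ) (hχ Γ))
    fun α β ih₁ ih₂ => mp (mp (ax2 Γ ψ α β) ih₁) ih₂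
  rcases hχ with rfl | hχ
  · exact MbcDeriv.imp_self Γ χ
  · exact mp (ax1 Γ χ ψ) (prem hχ)

theorem exists_finset_subset (h : MbcDeriv Γ φ) :
    ∃ s : Finset Form, ↑s ⊆ Γ ∧ MbcDeriv (↑s) φ := by
  classical
  refine h.induction_on (fun ψ hψ => ⟨{ψ}, by simpa using hψ, prem (by simp)⟩)
    (fun ψ hψ => ⟨∅, by simp, hψ _⟩) ?_
  rintro α β ⟨s, hsΓ, hs⟩ ⟨t, htΓ, ht⟩
  refine ⟨s ∪ t, by simpa using ⟨hsΓ, htΓ⟩, mp (hs.mono ?_) (ht.mono ?_)⟩ <;> simp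

structure Saturated (Δ : Set Form) (φ : Form) : Prop where
  not_deriv : ¬ MbcDeriv Δ φ
  deriv_insert : ∀ ψ ∉ Δ, MbcDeriv (insert ψ Δ) φ

theorem exists_saturated (h : ¬ MbcDeriv Γ φ) : ∃ Δ, Γ ⊆ Δ ∧ Saturated Δ φ := by
  have hub : ∀ c ⊆ {Δ | ¬ MbcDeriv Δ φ}, IsChain (· ⊆ ·) c → c.Nonempty →
      ∃ ub ∈ {Δ | ¬ MbcDeriv Δ φ}, ∀ s ∈ c, s ⊆ ub := by
    intro c hc hchain hne
    refine ⟨⋃₀ c, fun hd => ?_, fun s hs => Set.subset_sUnion_of_mem hs⟩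
    obtain ⟨s, hsc, hs⟩ := hd.exists_finset_subset
    rw [Set.sUnion_eq_biUnion] at hsc
    obtain ⟨t, htc, hst⟩ :=
      hchain.directedOn.exists_mem_subset_of_finset_subset_biUnion hne hsc
    exact hc htc (hs.mono hst)
  obtain ⟨Δ, hΓΔ, hmax⟩ := zorn_subset_nonempty {Δ | ¬ MbcDeriv Δ φ} hub Γ h
  refine ⟨Δ, hΓΔ, hmax.prop, fun ψ hψ => ?_⟩
  by_contra hd
  exact hψ (hmax.2 hd (Set.subset_insert ψ Δ) (Set.mem_insert ψ Δ))

namespace Saturated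

variable (hΔ : Saturated Δ φ)
include hΔ

theorem mem_of_deriv (h : MbcDeriv Δ ψ) : ψ ∈ Δ := by
  by_contra hψ
  exact hΔ.not_deriv (mp (deduction (hΔ.deriv_insert ψ hψ)) h)

theorem and_mem_iff (α β : Form) : α.and β ∈ Δ ↔ α ∈ Δ ∧ β ∈ Δ :=
  ⟨fun h => ⟨hΔ.mem_of_deriv (mp (ax4 Δ α β) (prem h)),
      hΔ.mem_of_deriv (mp (ax5 Δ α β) (prem h))⟩,
    fun h => hΔ.mem_of_deriv (mp (mp (ax3 Δ α β) (prem h.1)) (prem h.2))⟩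

theorem or_mem_iff (α β : Form) : α.or β ∈ Δ ↔ α ∈ Δ ∨ β ∈ Δ := by
  refine ⟨fun h => ?_, ?_⟩
  · by_contra! hαβ
    exact hΔ.not_deriv (mp (mp (mp (ax8 Δ α β φ) (deduction (hΔ.deriv_insert α hαβ.1)))
      (deduction (hΔ.deriv_insert β hαβ.2))) (prem h))
  · rintro (h | h)
    · exact hΔ.mem_of_deriv (mp (ax6 Δ α β) (prem h))
    · exact hΔ.mem_of_deriv (mp (ax7 Δ α β) (prem h))

theorem imp_mem_iff (α β : Form) : α.imp β ∈ Δ ↔ (α ∈ Δ → β ∈ Δ) := by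
  refine ⟨fun h hα => hΔ.mem_of_deriv (mp (prem h) (prem hα)), fun h => ?_⟩
  rcases (hΔ.or_mem_iff _ _).1 (hΔ.mem_of_deriv (ax9 Δ α β)) with hαβ | hα
  · exact hαβ
  · exact hΔ.mem_of_deriv (mp (ax1 Δ β α) (prem (h hα)))

theorem mem_or_neg_mem (α : Form) : α ∈ Δ ∨ α.neg ∈ Δ :=
  (hΔ.or_mem_iff _ _).1 (hΔ.mem_of_deriv (ax10 Δ α))

theorem circ_notMem_of_mem_of_neg_mem {α : Form} (h : α ∈ Δ) (hneg : α.neg ∈ Δ) :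
    α.circ ∉ Δ := fun hcirc =>
  hΔ.not_deriv (mp (mp (mp (bc1 Δ α φ) (prem hcirc)) (prem h)) (prem hneg))

end Saturated

end MbcDeriv

/-- `Set PUnit` serves as the two-element Boolean algebra in universe `u`, `{_x | p}` being
the truth value of `p`. -/
def canonicalVal (Δ : Set Form) (ψ : Form) :
    Set PUnit.{u + 1} × Set PUnit.{u + 1} × Set PUnit.{u + 1} :=
  ({_x | ψ ∈ Δ}, {_x | ψ.neg ∈ Δ}, {_x | ψ.circ ∈ Δ})

theorem canonicalVal_fst_eq_top {Δ : Set Form} {ψ : Form} :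
    (canonicalVal.{u} Δ ψ).1 = ⊤ ↔ ψ ∈ Δ := by
  simp [canonicalVal, Set.eq_univ_iff_forall]

theorem MbcDeriv.Saturated.isSwapVal_canonicalVal {Δ : Set Form} {φ : Form}
    (hΔ : MbcDeriv.Saturated Δ φ) : IsSwapVal (fullMbc _) (canonicalVal.{u} Δ) := by
  have hmem : ∀ ψ, canonicalVal.{u} Δ ψ ∈ BmbcSet _ := fun ψ =>
    ⟨by simpa [canonicalVal, Set.eq_univ_iff_forall] using hΔ.mem_or_neg_mem ψ,
      by simpa [canonicalVal, Set.eq_empty_iff_forall_notMem] using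
        fun h => hΔ.circ_notMem_of_mem_of_neg_mem (α := ψ) h⟩
  exact
    { mem := hmem
      vand := fun α β => ⟨hmem _, Set.ext fun _ => hΔ.and_mem_iff α β⟩
      vor := fun α β => ⟨hmem _, Set.ext fun _ => hΔ.or_mem_iff α β⟩
      vimp := fun α β => ⟨hmem _, Set.ext fun _ => hΔ.imp_mem_iff α β⟩
      vneg := fun _ => ⟨hmem _, rfl⟩
      vcirc := fun _ => ⟨hmem _, rfl⟩ }

theorem mbc_adequacy (Γ : Set Form) (φ : Form) :
    MbcDeriv Γ φ ↔
      ∀ (A : Type u) [BooleanAlgebra A] (S : SwapStr A), S.dom ⊆ BmbcSet A →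
        ∀ v : Form → A × A × A, IsSwapVal S v →
          (∀ γ ∈ Γ, (v γ).1 = ⊤) → (v φ).1 = ⊤ := by
  refine ⟨fun h A _ S hS v hv hΓ => h.sound hS hv hΓ, fun H => ?_⟩
  by_contra hφ
  obtain ⟨Δ, hΓΔ, hΔ⟩ := MbcDeriv.exists_saturated hφ
  have hval := H _ (fullMbc _) subset_rfl _ hΔ.isSwapVal_canonicalVal
    fun γ hγ => canonicalVal_fst_eq_top.2 (hΓΔ hγ)
  exact hΔ.not_deriv (.prem (canonicalVal_fst_eq_top.1 hval))
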